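/- Let C be an [n,k]_q linear code and P a poset on [n]. If C' = (C'; C'_0; C'_1,...,C'_r) and C'' = (C''; C''_0; C''_1,...,C''_s) are two maximal P-decompositions of C, with profiles [(n'_0,k'_0),(n'_1,k'_1),...,(n'_r,k'_r)] and [(n''_0,k''_0),(n''_1,k''_1),...,(n''_s,k''_s)], then r = s, (n'_0,k'_0) = (n''_0,k''_0), and there is a permutation σ of {1,...,r} such that (n'_i,k'_i) = (n''_{σ(i)},k''_{σ(i)}) for all i. -/

import Mathlib

/-- `I` is an ideal of the poset `P` on `[n]`. -/
def IsPosetIdeal {n : ℕ} (P : PartialOrder (Fin n)) (I : Set (Fin n)) : Prop :=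
  ∀ i ∈ I, ∀ j, P.le j i → j ∈ I

/-- The smallest ideal of `P` containing `X`. -/
def idealGen {n : ℕ} (P : PartialOrder (Fin n)) (X : Set (Fin n)) : Set (Fin n) :=
  ⋂₀ {I | IsPosetIdeal P I ∧ X ⊆ I}

/-- The `P`-weight `ω_P(x) = |⟨supp(x)⟩|`. -/
noncomputable def posetWeight {F : Type*} [Field F] {n : ℕ} (P : PartialOrder (Fin n))
    (x : Fin n → F) : ℕ :=
  (idealGen P {i | x i ≠ 0}).ncard

/-- The `P`-distance `d_P(x,y) = ω_P(x - y)`. -/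
noncomputable def posetDist {F : Type*} [Field F] {n : ℕ} (P : PartialOrder (Fin n))
    (x y : Fin n → F) : ℕ :=
  posetWeight P (x - y)

/-- A linear `P`-isometry of `F_q^n`. -/
def IsPIsometry {F : Type*} [Field F] {n : ℕ} (P : PartialOrder (Fin n))
    (T : (Fin n → F) ≃ₗ[F] (Fin n → F)) : Prop :=
  ∀ x y, posetDist P (T x) (T y) = posetDist P x y

/-- The support of a subspace `D ⊆ F_q^n`. -/
def suppS {F : Type*} [Field F] {n : ℕ} (D : Submodule F (Fin n → F)) : Set (Fin n) :=
  {j | ∃ x ∈ D, x j ≠ 0}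

/-- `C_0`: the subspace of all vectors vanishing on the support of `C`. -/
def coSupp {F : Type*} [Field F] {n : ℕ} (C : Submodule F (Fin n → F)) :
    Submodule F (Fin n → F) where
  carrier := {x | ∀ j ∈ suppS C, x j = 0}
  add_mem' := by
    intro a b ha hb j hj
    simp only [Set.mem_setOf_eq] at ha hb ⊢
    rw [Pi.add_apply, ha j hj, hb j hj, add_zero]
  zero_mem' := by intro j _; rfl
  smul_mem' := by
    intro c a ha j hj
    simp only [Set.mem_setOf_eq] at ha ⊢
    rw [Pi.smul_apply, ha j hj, smul_zero]

/-- A decomposition `(C; C_0; C_1, …, C_r)` of a linear code `C ⊆ F_q^n`: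
nonzero subspaces `C_1, …, C_r` with pairwise disjoint supports whose internal
direct sum is `C`.  (The distinguished part `C_0 = coSupp C` is determined by `C`.) -/
structure Decomposition {F : Type*} [Field F] {n : ℕ} (C : Submodule F (Fin n → F)) where
  r : ℕ
  D : Fin r → Submodule F (Fin n → F)
  ne_bot : ∀ i, D i ≠ ⊥
  indep : iSupIndep D
  sup_eq : ⨆ i, D i = C
  disj : Pairwise fun i j => Disjoint (suppS (D i)) (suppS (D j))

/-- A `P`-decomposition of `C`: a decomposition of a code `C'` that is
`P`-equivalent to `C`. -/
structure PDecomposition {F : Type*} [Field F] {n : ℕ} (P : PartialOrder (Fin n))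
    (C : Submodule F (Fin n → F)) where
  C' : Submodule F (Fin n → F)
  T : (Fin n → F) ≃ₗ[F] (Fin n → F)
  isom : IsPIsometry P T
  image : Submodule.map (T : (Fin n → F) →ₗ[F] (Fin n → F)) C = C'
  dec : Decomposition C'

/-- A trivial `P`-decomposition of `C`: a single component, with
`|supp(C')| = |supp(C)|` and `|supp(C'_0)| = |supp(C_0)|`. -/
def PDecomposition.IsTrivial {F : Type*} [Field F] {n : ℕ} {P : PartialOrder (Fin n)}
    {C : Submodule F (Fin n → F)} (d : PDecomposition P C) : Prop :=
  d.dec.r = 1 ∧ (suppS d.C').ncard = (suppS C).ncard ∧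
    (suppS (coSupp d.C')).ncard = (suppS (coSupp C)).ncard

/-- A code is `P`-irreducible if it admits no non-trivial `P`-decomposition. -/
def PIrreducible {F : Type*} [Field F] {n : ℕ} (P : PartialOrder (Fin n))
    (C : Submodule F (Fin n → F)) : Prop :=
  ∀ d : PDecomposition P C, d.IsTrivial

/-- A `P`-decomposition is maximal if each of its components is `P`-irreducible. -/
def PDecomposition.IsMaximal {F : Type*} [Field F] {n : ℕ} {P : PartialOrder (Fin n)}
    {C : Submodule F (Fin n → F)} (d : PDecomposition P C) : Prop :=
  ∀ i, PIrreducible P (d.dec.D i)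

/-!
A `P`-irreducible code has an ideal as support: if `j ⪯ i` with `i` in the support and `j` not,
the transvection adding the `i`-th coordinate to the `j`-th is a `P`-isometry that enlarges the
support, so the one-component decomposition it induces is non-trivial.

Let `T` be the isometry between the two decomposed codes. For `y` in a component, split `T y`
along the other decomposition, whose components have disjoint ideal supports; weight counting
(`IsPIsometry.support_apply_subset`) puts every pulled-back piece inside the ideal generated by
`supp y`, hence in the component of `y`. So the image of each component splits along the other
decomposition, and irreducibility leaves a single piece. This matches the components
bijectively, `T` carrying each onto its partner, which preserves dimension and, by
irreducibility, support size; summing over components gives `n₀` and `k₀`.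
-/

open Function

section PosetIdeal

variable {n : ℕ} {P : PartialOrder (Fin n)}

lemma isPosetIdeal_idealGen (X : Set (Fin n)) : IsPosetIdeal P (idealGen P X) :=
  fun i hi j hji I hI => hI.1 i (hi I hI) j hji

lemma subset_idealGen (X : Set (Fin n)) : X ⊆ idealGen P X :=
  fun _ hx _ hI => hI.2 hx

lemma idealGen_subset {X I : Set (Fin n)} (hI : IsPosetIdeal P I) (hXI : X ⊆ I) :
    idealGen P X ⊆ I :=
  fun _ hx => hx I ⟨hI, hXI⟩

lemma idealGen_mono {X Y : Set (Fin n)} (h : X ⊆ Y) : idealGen P X ⊆ idealGen P Y :=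
  idealGen_subset (isPosetIdeal_idealGen Y) (h.trans (subset_idealGen Y))

lemma isPosetIdeal_iUnion {ι : Sort*} {I : ι → Set (Fin n)} (h : ∀ k, IsPosetIdeal P (I k)) :
    IsPosetIdeal P (⋃ k, I k) := by
  intro i hi j hji
  obtain ⟨k, hk⟩ := Set.mem_iUnion.1 hi
  exact Set.mem_iUnion.2 ⟨k, h k i hk j hji⟩

lemma idealGen_iUnion_subset {ι : Sort*} (X : ι → Set (Fin n)) :
    idealGen P (⋃ k, X k) ⊆ ⋃ k, idealGen P (X k) :=
  idealGen_subset (isPosetIdeal_iUnion fun _ => isPosetIdeal_idealGen _)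
    (Set.iUnion_mono fun _ => subset_idealGen _)

lemma idealGen_insert_of_le {X : Set (Fin n)} {i j : Fin n} (hi : i ∈ X) (hji : P.le j i) :
    idealGen P (insert j X) = idealGen P X := by
  have hj : j ∈ idealGen P X := isPosetIdeal_idealGen X i (subset_idealGen X hi) j hji
  exact (idealGen_subset (isPosetIdeal_idealGen X)
    (Set.insert_subset hj (subset_idealGen X))).antisymm (idealGen_mono (Set.subset_insert j X))

end PosetIdeal

section PosetWeight

variable {F : Type*} [Field F] {n : ℕ} {P : PartialOrder (Fin n)}

lemma posetWeight_eq (x : Fin n → F) : posetWeight P x = (idealGen P (support x)).ncard := rfl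

lemma IsPIsometry.posetWeight_apply {T : (Fin n → F) ≃ₗ[F] (Fin n → F)} (hT : IsPIsometry P T)
    (x : Fin n → F) : posetWeight P (T x) = posetWeight P x := by
  simpa [posetDist] using hT x 0

lemma IsPIsometry.symm {T : (Fin n → F) ≃ₗ[F] (Fin n → F)} (hT : IsPIsometry P T) :
    IsPIsometry P T.symm := fun x y => by
  simpa using (hT (T.symm x) (T.symm y)).symm

lemma IsPIsometry.trans {T S : (Fin n → F) ≃ₗ[F] (Fin n → F)} (hT : IsPIsometry P T)
    (hS : IsPIsometry P S) : IsPIsometry P (T.trans S) := fun x y => by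
  simpa using (hS (T x) (T y)).trans (hT x y)

lemma idealGen_support_sum_subset {ι : Type*} [Fintype ι] (x : ι → Fin n → F) :
    idealGen P (support (∑ i, x i)) ⊆ ⋃ i, idealGen P (support (x i)) := by
  refine (idealGen_mono ?_).trans (idealGen_iUnion_subset _)
  simpa [Finset.sum_fn] using Finset.support_sum Finset.univ x

lemma sum_posetWeight_le {ι : Type*} [Fintype ι] {x : ι → Fin n → F}
    (hx : Pairwise (Disjoint on fun i => idealGen P (support (x i)))) :
    ∑ i, posetWeight P (x i) ≤ posetWeight P (∑ i, x i) := by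
  have hsupp : ∀ i, support (x i) ⊆ support (∑ i, x i) := by
    intro i m hm
    rw [mem_support, Finset.sum_apply, Finset.sum_eq_single i _ (by simp)]
    · exact hm
    intro k _ hki
    by_contra hk
    exact Set.disjoint_left.1 (hx hki) (subset_idealGen _ hk) (subset_idealGen _ hm)
  calc ∑ i, posetWeight P (x i) = (⋃ i, idealGen P (support (x i))).ncard := by
        rw [Set.ncard_iUnion_of_finite (fun _ => Set.toFinite _) hx, finsum_eq_sum_of_fintype]
        rfl
    _ ≤ posetWeight P (∑ i, x i) :=
        Set.ncard_le_ncard (Set.iUnion_subset fun i => idealGen_mono (hsupp i))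

/-- `ω(∑ xᵢ) ≥ ∑ ω(xᵢ) = ∑ ω(T xᵢ)` bounds the size of `⋃ ⟨supp (T xᵢ)⟩`, a cover of the ideal
of `T (∑ xᵢ)`, whose size is `ω(∑ xᵢ)`; so the cover is exactly that ideal. -/
lemma IsPIsometry.support_apply_subset {T : (Fin n → F) ≃ₗ[F] (Fin n → F)} (hT : IsPIsometry P T)
    {ι : Type*} [Fintype ι] {x : ι → Fin n → F}
    (hx : Pairwise (Disjoint on fun i => idealGen P (support (x i)))) (i : ι) :
    support (T (x i)) ⊆ idealGen P (support (T (∑ j, x j))) := by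
  set M := ⋃ j, idealGen P (support (T (x j)))
  have hsub : idealGen P (support (T (∑ j, x j))) ⊆ M := by
    rw [map_sum]
    exact idealGen_support_sum_subset _
  have hcard : M.ncard ≤ (idealGen P (support (T (∑ j, x j)))).ncard := calc
    M.ncard ≤ ∑ j, posetWeight P (T (x j)) := Set.ncard_iUnion_le_of_fintype _
    _ = ∑ j, posetWeight P (x j) := by simp only [hT.posetWeight_apply]
    _ ≤ posetWeight P (∑ j, x j) := sum_posetWeight_le hx
    _ = _ := (hT.posetWeight_apply _).symm
  rw [Set.eq_of_subset_of_ncard_le hsub hcard]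
  exact (subset_idealGen _).trans (Set.subset_iUnion (fun j => idealGen P (support (T (x j)))) i)

end PosetWeight

section Support

variable {F : Type*} [Field F] {n : ℕ}

lemma support_subset_suppS {D : Submodule F (Fin n → F)} {x : Fin n → F} (hx : x ∈ D) :
    support x ⊆ suppS D :=
  fun _ hj => ⟨x, hx, hj⟩

lemma suppS_mono {D E : Submodule F (Fin n → F)} (h : D ≤ E) : suppS D ⊆ suppS E :=
  fun _ ⟨x, hx, hj⟩ => ⟨x, h hx, hj⟩

lemma suppS_iSup {ι : Sort*} (D : ι → Submodule F (Fin n → F)) :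
    suppS (⨆ i, D i) = ⋃ i, suppS (D i) := by
  refine Set.Subset.antisymm ?_ (Set.iUnion_subset fun i => suppS_mono (le_iSup D i))
  rintro j ⟨x, hx, hj⟩
  refine Submodule.iSup_induction D (motive := fun x => support x ⊆ ⋃ i, suppS (D i)) hx
    (fun i x hx => (support_subset_suppS hx).trans (Set.subset_iUnion (fun i => suppS (D i)) i))
    (by simp) (fun x y hx hy => (support_add x y).trans (Set.union_subset hx hy)) hj

lemma mem_coSupp {D : Submodule F (Fin n → F)} {x : Fin n → F} :
    x ∈ coSupp D ↔ ∀ j ∈ suppS D, x j = 0 :=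
  Iff.rfl

lemma le_coSupp_of_disjoint {D E : Submodule F (Fin n → F)}
    (h : Disjoint (suppS D) (suppS E)) : D ≤ coSupp E :=
  fun x hx _ hj => by_contra fun hxj => Set.disjoint_left.1 h ⟨x, hx, hxj⟩ hj

lemma disjoint_coSupp (D : Submodule F (Fin n → F)) : Disjoint D (coSupp D) := by
  refine Submodule.disjoint_def.2 fun x hxD hx0 => funext fun j => ?_
  by_contra hxj
  exact hxj (hx0 j ⟨x, hxD, hxj⟩)

lemma suppS_coSupp (D : Submodule F (Fin n → F)) : suppS (coSupp D) = (suppS D)ᶜ := by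
  refine Set.Subset.antisymm (fun j ⟨x, hx, hxj⟩ hj => hxj (hx j hj)) fun j hj => ?_
  refine ⟨Pi.single j 1, fun k hk => ?_, by simp⟩
  exact Pi.single_eq_of_ne (fun hkj : k = j => hj (hkj ▸ hk)) 1

lemma finrank_coSupp (D : Submodule F (Fin n → F)) :
    Module.finrank F (coSupp D) = (suppS D)ᶜ.ncard := by
  classical
  have hcoSupp : coSupp D = ⨅ j ∈ suppS D, LinearMap.ker (LinearMap.proj j) := by
    ext x
    simp [mem_coSupp]
  rw [hcoSupp, (LinearMap.iInfKerProjEquiv F (fun _ : Fin n => F) disjoint_compl_left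
    (by simp)).finrank_eq, Module.finrank_pi, Set.ncard_eq_toFinset_card', Set.toFinset_card]

end Support

lemma exists_sum_eq_of_mem_iSup {R M ι : Type*} [Semiring R] [AddCommMonoid M] [Module R M]
    [Fintype ι] (p : ι → Submodule R M) {y : M} (hy : y ∈ ⨆ i, p i) :
    ∃ x : ι → M, (∀ i, x i ∈ p i) ∧ ∑ i, x i = y := by
  obtain ⟨f, hf, rfl⟩ := (Submodule.mem_iSup_iff_exists_finsupp p y).1 hy
  exact ⟨f, hf, (Finsupp.sum_fintype f (fun _ x => x) fun _ => rfl).symm⟩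

section Decomposition

variable {F : Type*} [Field F] {n : ℕ}

lemma iSupIndep_of_pairwise_disjoint_suppS {ι : Type*} {D : ι → Submodule F (Fin n → F)}
    (h : Pairwise (Disjoint on fun i => suppS (D i))) : iSupIndep D := fun i =>
  (disjoint_coSupp (D i)).mono_right (iSup₂_le fun _ hji => le_coSupp_of_disjoint (h hji))

def Decomposition.ofPairwiseDisjoint {r : ℕ} (D : Fin r → Submodule F (Fin n → F))
    (hD : ∀ i, D i ≠ ⊥) (h : Pairwise (Disjoint on fun i => suppS (D i))) :
    Decomposition (⨆ i, D i) :=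
  ⟨r, D, hD, iSupIndep_of_pairwise_disjoint_suppS h, rfl, h⟩

namespace Decomposition

variable {C : Submodule F (Fin n → F)} (d : Decomposition C)

lemma suppS_eq : suppS C = ⋃ i, suppS (d.D i) := by
  rw [← suppS_iSup, d.sup_eq]

lemma ncard_suppS : (suppS C).ncard = ∑ i, (suppS (d.D i)).ncard := by
  rw [d.suppS_eq, Set.ncard_iUnion_of_finite (fun _ => Set.toFinite _) d.disj,
    finsum_eq_sum_of_fintype]

lemma mem_of_support_subset {x : Fin n → F} (hx : x ∈ C) {i : Fin d.r}
    (h : support x ⊆ suppS (d.D i)) : x ∈ d.D i := by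
  have hx' : x ∈ d.D i ⊔ ⨆ (j) (_ : j ≠ i), d.D j := by rwa [← iSup_split_single, d.sup_eq]
  obtain ⟨y, hy, z, hz, rfl⟩ := Submodule.mem_sup.1 hx'
  have hle : ⨆ (j) (_ : j ≠ i), d.D j ≤ coSupp (d.D i) :=
    iSup₂_le fun _ hji => le_coSupp_of_disjoint (d.disj hji)
  have hz₀ : z ∈ coSupp (d.D i) := hle hz
  have hzs : support z ⊆ suppS (d.D i) := by
    simpa using (support_sub (y + z) y).trans (Set.union_subset h (support_subset_suppS hy))
  have : z = 0 := funext fun j => by_contra fun hzj => hzj (hz₀ j (hzs hzj))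
  rwa [this, add_zero]

lemma eq_of_le {i j : Fin d.r} (h : d.D i ≤ d.D j) : i = j := by
  by_contra hij
  exact d.ne_bot i ((d.indep.pairwiseDisjoint hij).eq_bot_of_le h)

lemma exists_equiv_map_eq {C' : Submodule F (Fin n → F)} (d' : Decomposition C')
    (U : (Fin n → F) ≃ₗ[F] (Fin n → F))
    (h : ∀ i, ∃ j, (d.D i).map (U : (Fin n → F) →ₗ[F] (Fin n → F)) ≤ d'.D j)
    (h' : ∀ j, ∃ i, (d'.D j).map (U.symm : (Fin n → F) →ₗ[F] (Fin n → F)) ≤ d.D i) :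
    ∃ σ : Fin d.r ≃ Fin d'.r, ∀ i,
      (d.D i).map (U : (Fin n → F) →ₗ[F] (Fin n → F)) = d'.D (σ i) := by
  choose ρ hρ using h
  choose τ hτ using h'
  have hτρ : ∀ i, τ (ρ i) = i := fun i => (d.eq_of_le <| le_trans
    (by rw [← Submodule.comap_equiv_eq_map_symm]; exact Submodule.map_le_iff_le_comap.1 (hρ i))
    (hτ (ρ i))).symm
  have hρτ : ∀ j, ρ (τ j) = j := fun j => (d'.eq_of_le <| le_trans
    (by rw [Submodule.map_equiv_eq_comap_symm]; exact Submodule.map_le_iff_le_comap.1 (hτ j))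
    (hρ (τ j))).symm
  refine ⟨⟨ρ, τ, hτρ, hρτ⟩, fun i => (hρ i).antisymm ?_⟩
  have := Submodule.map_le_iff_le_comap.1 (hτ (ρ i))
  rwa [Submodule.comap_equiv_eq_map_symm, LinearEquiv.symm_symm, hτρ] at this

end Decomposition

def PDecomposition.ofIsometry {P : PartialOrder (Fin n)} {C : Submodule F (Fin n → F)}
    {T : (Fin n → F) ≃ₗ[F] (Fin n → F)} (hT : IsPIsometry P T) {r : ℕ}
    (D : Fin r → Submodule F (Fin n → F)) (hD : ∀ i, D i ≠ ⊥)
    (h : Pairwise (Disjoint on fun i => suppS (D i)))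
    (hmap : C.map (T : (Fin n → F) →ₗ[F] (Fin n → F)) = ⨆ i, D i) : PDecomposition P C :=
  ⟨⨆ i, D i, T, hT, hmap, .ofPairwiseDisjoint D hD h⟩

end Decomposition

section Transvection

variable (F : Type*) [Field F] {n : ℕ} {i j : Fin n}

def elementaryTransvection (hij : j ≠ i) : (Fin n → F) ≃ₗ[F] (Fin n → F) :=
  LinearEquiv.transvection (f := LinearMap.proj i) (v := Pi.single j 1)
    (Pi.single_eq_of_ne hij.symm 1)

variable {F} {P : PartialOrder (Fin n)}

lemma elementaryTransvection_apply (hij : j ≠ i) (x : Fin n → F) :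
    elementaryTransvection F hij x = x + x i • Pi.single j 1 :=
  rfl

lemma elementaryTransvection_apply_of_ne (hij : j ≠ i) (x : Fin n → F) {m : Fin n} (hm : m ≠ j) :
    elementaryTransvection F hij x m = x m := by
  simp [elementaryTransvection_apply, Pi.single_eq_of_ne hm]

lemma elementaryTransvection_apply_self (hij : j ≠ i) (x : Fin n → F) :
    elementaryTransvection F hij x j = x j + x i := by
  simp [elementaryTransvection_apply]

lemma isPIsometry_elementaryTransvection (hij : j ≠ i) (hji : P.le j i) :
    IsPIsometry P (elementaryTransvection F hij) := by
  suffices h : ∀ x, posetWeight P (elementaryTransvection F hij x) = posetWeight P x from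
    fun x y => by rw [posetDist, posetDist, ← map_sub, h]
  intro x
  by_cases hxi : x i = 0
  · simp [elementaryTransvection_apply, hxi]
  have hi : i ∈ support (elementaryTransvection F hij x) := by
    rwa [mem_support, elementaryTransvection_apply_of_ne hij x hij.symm]
  have hins : insert j (support (elementaryTransvection F hij x)) = insert j (support x) := by
    ext m
    by_cases hm : m = j
    · simp [hm]
    · simp [hm, elementaryTransvection_apply_of_ne hij x hm]
  rw [posetWeight_eq, posetWeight_eq, ← idealGen_insert_of_le hi hji, hins,
    idealGen_insert_of_le hxi hji]

end Transvection

namespace PIrreducible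

variable {F : Type*} [Field F] {n : ℕ} {P : PartialOrder (Fin n)} {B : Submodule F (Fin n → F)}
  {T : (Fin n → F) ≃ₗ[F] (Fin n → F)}

lemma eq_one_of_map_eq_iSup (hB : PIrreducible P B) (hT : IsPIsometry P T) {r : ℕ}
    {D : Fin r → Submodule F (Fin n → F)} (hD : ∀ i, D i ≠ ⊥)
    (h : Pairwise (Disjoint on fun i => suppS (D i)))
    (hmap : B.map (T : (Fin n → F) →ₗ[F] (Fin n → F)) = ⨆ i, D i) : r = 1 :=
  (hB (.ofIsometry hT D hD h hmap)).1

lemma ne_bot (hB : PIrreducible P B) : B ≠ ⊥ := by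
  rintro rfl
  have hrefl : IsPIsometry P (LinearEquiv.refl F (Fin n → F)) := fun _ _ => rfl
  exact zero_ne_one (hB.eq_one_of_map_eq_iSup hrefl (D := ![]) (fun i => i.elim0)
    (fun i => i.elim0) ((Submodule.map_bot _).trans (iSup_of_empty _).symm))

lemma ncard_suppS_map (hB : PIrreducible P B) (hT : IsPIsometry P T) :
    (suppS (B.map (T : (Fin n → F) →ₗ[F] (Fin n → F)))).ncard = (suppS B).ncard := by
  have hne : B.map (T : (Fin n → F) →ₗ[F] (Fin n → F)) ≠ ⊥ := by simpa using hB.ne_bot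
  have h₁ : (suppS (⨆ _ : Fin 1, B.map (T : (Fin n → F) →ₗ[F] (Fin n → F)))).ncard =
      (suppS B).ncard :=
    (hB (.ofIsometry hT _ (fun _ => hne) Subsingleton.pairwise (by simp))).2.1
  simpa using h₁

lemma eq_bot_or_eq_bot_of_map_eq_sup (hB : PIrreducible P B) (hT : IsPIsometry P T)
    {D₁ D₂ : Submodule F (Fin n → F)} (h : Disjoint (suppS D₁) (suppS D₂))
    (hmap : B.map (T : (Fin n → F) →ₗ[F] (Fin n → F)) = D₁ ⊔ D₂) : D₁ = ⊥ ∨ D₂ = ⊥ := by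
  by_contra! hne
  refine absurd (hB.eq_one_of_map_eq_iSup hT (D := ![D₁, D₂]) (Fin.forall_fin_two.2 hne) ?_
    (hmap.trans ?_)) (by decide)
  · intro a b hab
    fin_cases a <;> fin_cases b <;> simp_all [onFun, h.symm]
  · exact le_antisymm (sup_le (le_iSup ![D₁, D₂] 0) (le_iSup ![D₁, D₂] 1))
      (iSup_le (Fin.forall_fin_two.2 ⟨le_sup_left, le_sup_right⟩))

lemma isPosetIdeal_suppS (hB : PIrreducible P B) : IsPosetIdeal P (suppS B) := by
  intro i hi j hji
  by_contra hj
  have hij : j ≠ i := fun h => hj (h ▸ hi)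
  set τ := elementaryTransvection F hij
  have hsub : insert j (suppS B) ⊆ suppS (B.map (τ : (Fin n → F) →ₗ[F] (Fin n → F))) := by
    rintro m (rfl | ⟨x, hx, hxm⟩)
    · obtain ⟨x, hx, hxi⟩ := hi
      refine ⟨τ x, Submodule.mem_map_of_mem hx, ?_⟩
      rwa [elementaryTransvection_apply_self, (by_contra fun h => hj ⟨x, hx, h⟩ : x m = 0),
        zero_add]
    · refine ⟨τ x, Submodule.mem_map_of_mem hx, ?_⟩
      rwa [elementaryTransvection_apply_of_ne hij x (fun h => hj (h ▸ ⟨x, hx, hxm⟩))]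
  have hcard := Set.ncard_le_ncard hsub
  rw [Set.ncard_insert_of_notMem hj,
    hB.ncard_suppS_map (isPIsometry_elementaryTransvection hij hji)] at hcard
  omega

lemma exists_map_le (hB : PIrreducible P B) (hT : IsPIsometry P T) {ι : Type*}
    {A : ι → Submodule F (Fin n → F)} (hA : Pairwise (Disjoint on fun i => suppS (A i)))
    (h : B.map (T : (Fin n → F) →ₗ[F] (Fin n → F)) ≤
      ⨆ i, B.map (T : (Fin n → F) →ₗ[F] (Fin n → F)) ⊓ A i) :
    ∃ i, B.map (T : (Fin n → F) →ₗ[F] (Fin n → F)) ≤ A i := by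
  set V := B.map (T : (Fin n → F) →ₗ[F] (Fin n → F))
  obtain ⟨i, hi⟩ : ∃ i, V ⊓ A i ≠ ⊥ := by
    by_contra! h₀
    exact hB.ne_bot (by simpa [V, h₀] using h)
  have hsplit : V = V ⊓ A i ⊔ V ⊓ coSupp (A i) := by
    refine le_antisymm (h.trans (iSup_le fun k => ?_)) (sup_le inf_le_left inf_le_left)
    rcases eq_or_ne k i with rfl | hki
    · exact le_sup_left
    · exact le_sup_of_le_right (inf_le_inf_left V (le_coSupp_of_disjoint (hA hki)))
  have hdisj : Disjoint (suppS (V ⊓ A i)) (suppS (V ⊓ coSupp (A i))) :=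
    disjoint_compl_right.mono (suppS_mono inf_le_right)
      ((suppS_mono inf_le_right).trans (suppS_coSupp (A i)).le)
  rcases hB.eq_bot_or_eq_bot_of_map_eq_sup hT hdisj hsplit with h₁ | h₂
  · exact absurd h₁ hi
  · exact ⟨i, by rw [hsplit, h₂, sup_bot_eq]; exact inf_le_right⟩

end PIrreducible

section Matching

variable {F : Type*} [Field F] {n : ℕ} {P : PartialOrder (Fin n)}
  {C₁ C₂ : Submodule F (Fin n → F)} {T : (Fin n → F) ≃ₗ[F] (Fin n → F)}

lemma map_le_iSup_map_inf (hT : IsPIsometry P T)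
    (hmap : C₂.map (T : (Fin n → F) →ₗ[F] (Fin n → F)) = C₁)
    (a : Decomposition C₁) (b : Decomposition C₂) (ha : ∀ i, IsPosetIdeal P (suppS (a.D i)))
    (hb : ∀ j, IsPosetIdeal P (suppS (b.D j))) (j : Fin b.r) :
    (b.D j).map (T : (Fin n → F) →ₗ[F] (Fin n → F)) ≤
      ⨆ i, (b.D j).map (T : (Fin n → F) →ₗ[F] (Fin n → F)) ⊓ a.D i := by
  rintro _ ⟨y, hy, rfl⟩
  rw [LinearEquiv.coe_coe]
  have hTy : T y ∈ ⨆ i, a.D i := by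
    rw [a.sup_eq, ← hmap, ← b.sup_eq]
    exact Submodule.mem_map_of_mem (Submodule.mem_iSup_of_mem j hy)
  obtain ⟨x, hx, hsum⟩ := exists_sum_eq_of_mem_iSup a.D hTy
  rw [← hsum]
  refine Submodule.sum_mem _ fun i _ => Submodule.mem_iSup_of_mem i ⟨?_, hx i⟩
  have hdisj : Pairwise (Disjoint on fun i => idealGen P (support (x i))) := fun i k hik =>
    (a.disj hik).mono (idealGen_subset (ha i) (support_subset_suppS (hx i)))
      (idealGen_subset (ha k) (support_subset_suppS (hx k)))
  have hsupp : support (T.symm (x i)) ⊆ suppS (b.D j) := by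
    have := hT.symm.support_apply_subset hdisj i
    rw [hsum, T.symm_apply_apply] at this
    exact this.trans (idealGen_subset (hb j) (support_subset_suppS hy))
  have hC₂ : T.symm (x i) ∈ C₂ := by
    rw [← Submodule.mem_map_equiv, hmap, ← a.sup_eq]
    exact Submodule.mem_iSup_of_mem i (hx i)
  exact (Submodule.mem_map_equiv _).2 (b.mem_of_support_subset hC₂ hsupp)

lemma exists_map_le_of_isPIsometry (hT : IsPIsometry P T)
    (hmap : C₂.map (T : (Fin n → F) →ₗ[F] (Fin n → F)) = C₁)
    (a : Decomposition C₁) (b : Decomposition C₂) (ha : ∀ i, PIrreducible P (a.D i))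
    (hb : ∀ j, PIrreducible P (b.D j)) (j : Fin b.r) :
    ∃ i, (b.D j).map (T : (Fin n → F) →ₗ[F] (Fin n → F)) ≤ a.D i :=
  (hb j).exists_map_le hT a.disj <| map_le_iSup_map_inf hT hmap a b
    (fun i => (ha i).isPosetIdeal_suppS) (fun j => (hb j).isPosetIdeal_suppS) j

end Matching

theorem profile_unique_general {F : Type*} [Field F] {n : ℕ}
    (P : PartialOrder (Fin n)) (C : Submodule F (Fin n → F))
    (d' d'' : PDecomposition P C) (h' : d'.IsMaximal) (h'' : d''.IsMaximal) :
    d'.dec.r = d''.dec.r ∧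
    ((suppS (coSupp d'.C')).ncard = (suppS (coSupp d''.C')).ncard ∧
      Module.finrank F (coSupp d'.C') = Module.finrank F (coSupp d''.C')) ∧
    ∃ σ : Fin d'.dec.r ≃ Fin d''.dec.r, ∀ i,
      (suppS (d'.dec.D i)).ncard = (suppS (d''.dec.D (σ i))).ncard ∧
      Module.finrank F (d'.dec.D i) = Module.finrank F (d''.dec.D (σ i)) := by
  set U := d'.T.symm.trans d''.T
  have hU : IsPIsometry P U := d'.isom.symm.trans d''.isom
  have hmap : d'.C'.map (U : (Fin n → F) →ₗ[F] (Fin n → F)) = d''.C' := by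
    rw [← d'.image, ← d''.image, ← Submodule.map_comp]
    congr 1
    ext x
    simp [U]
  have hmap' : d''.C'.map (U.symm : (Fin n → F) →ₗ[F] (Fin n → F)) = d'.C' :=
    (Submodule.map_symm_eq_iff U).2 hmap
  obtain ⟨σ, hσ⟩ := d'.dec.exists_equiv_map_eq d''.dec U
    (exists_map_le_of_isPIsometry hU hmap d''.dec d'.dec h'' h')
    (exists_map_le_of_isPIsometry hU.symm hmap' d'.dec d''.dec h' h'')
  have hprofile : ∀ i, (suppS (d'.dec.D i)).ncard = (suppS (d''.dec.D (σ i))).ncard ∧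
      Module.finrank F (d'.dec.D i) = Module.finrank F (d''.dec.D (σ i)) := fun i =>
    ⟨by rw [← hσ i, (h' i).ncard_suppS_map hU], by rw [← hσ i, LinearEquiv.finrank_map_eq]⟩
  have hsupp : (suppS d'.C').ncard = (suppS d''.C').ncard := by
    rw [d'.dec.ncard_suppS, d''.dec.ncard_suppS]
    exact Fintype.sum_equiv σ _ _ fun i => (hprofile i).1
  refine ⟨by simpa using Fintype.card_congr σ, ⟨?_, ?_⟩, σ, hprofile⟩
  · rw [suppS_coSupp, suppS_coSupp, Set.ncard_compl, Set.ncard_compl, hsupp]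
  · rw [finrank_coSupp, finrank_coSupp, Set.ncard_compl, Set.ncard_compl, hsupp]

/-- **Theorem 1.** Two maximal `P`-decompositions of an `[n,k]_q` code
`C` have the same number of components and, up to a permutation, the same profile:
the `(n_i, k_i)` pairs coincide, as does the pair `(n_0, k_0)` for the
distinguished parts. -/
theorem profile_unique {F : Type*} [Field F] [Fintype F] {n : ℕ}
    (P : PartialOrder (Fin n)) (C : Submodule F (Fin n → F))
    (d' d'' : PDecomposition P C) (h' : d'.IsMaximal) (h'' : d''.IsMaximal) :
    d'.dec.r = d''.dec.r ∧
    ((suppS (coSupp d'.C')).ncard = (suppS (coSupp d''.C')).ncard ∧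
      Module.finrank F (coSupp d'.C') = Module.finrank F (coSupp d''.C')) ∧
    ∃ σ : Fin d'.dec.r ≃ Fin d''.dec.r, ∀ i,
      (suppS (d'.dec.D i)).ncard = (suppS (d''.dec.D (σ i))).ncard ∧
      Module.finrank F (d'.dec.D i) = Module.finrank F (d''.dec.D (σ i)) :=
  profile_unique_general P C d' d'' h' h''
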